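/- (Optimality of the distance function for the adversarial functional.) Let μ and ν be Borel probability measures on a real Hilbert space X, with μ supported on a set M (i.e., μ(Mᶜ) = 0), and suppose the pushforward of ν under a measurable projection map P : X → M satisfying ‖z − P(z)‖ = d_M(z) equals μ. Then for every convex, 1-Lipschitz, nonnegative function f : X → ℝ, ∫ f dν − ∫ f dμ ≤ ∫ d_M dν − ∫ d_M dμ. In particular d_M maximizes f ↦ ∫ f dν − ∫ f dμ over convex 1-Lipschitz nonnegative functions. -/
import Mathlib

open MeasureTheory

/-- Optimality of the distance function for the adversarial functional. -/
theorem stmt_4 {X : Type*} [NormedAddCommGroup X] [InnerProductSpace ℝ X] [CompleteSpace X]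
    [MeasurableSpace X] [BorelSpace X]
    (M : Set X) (hM : M.Nonempty) (hconv : Convex ℝ M) (hcomp : IsCompact M)
    (P : X → X) (hPmeas : Measurable P) (hPM : ∀ z : X, P z ∈ M)
    (hPdist : ∀ z : X, ‖z - P z‖ = Metric.infDist z M)
    (μ ν : Measure X) [IsProbabilityMeasure μ] [IsProbabilityMeasure ν]
    (hsupp : μ Mᶜ = 0) (hpush : Measure.map P ν = μ) :
    ∀ f : X → ℝ, ConvexOn ℝ Set.univ f → LipschitzWith 1 f → (∀ x, 0 ≤ f x) →
      Integrable f ν → Integrable f μ →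
      Integrable (fun x => Metric.infDist x M) ν →
      Integrable (fun x => Metric.infDist x M) μ →
      (∫ x, f x ∂ν) - (∫ x, f x ∂μ)
        ≤ (∫ x, Metric.infDist x M ∂ν) - (∫ x, Metric.infDist x M ∂μ) := by
  intro f hfconv hflip hfnn hfν hfμ hdν hdμ
  have hfc : Continuous f := hflip.continuous
  -- ∫ d dμ = 0
  have hdμ0 : (∫ x, Metric.infDist x M ∂μ) = 0 := by
    have hae : (fun x => Metric.infDist x M) =ᵐ[μ] (fun _ => (0 : ℝ)) := by
      refine measure_mono_null ?_ hsupp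
      intro x hx
      simp only [Set.mem_setOf_eq] at hx
      intro hxM
      exact hx (Metric.infDist_zero_of_mem hxM)
    rw [integral_congr_ae hae, integral_const, smul_zero]
  -- ∫ f dμ = ∫ f ∘ P dν
  have hmap : (∫ x, f x ∂μ) = ∫ x, f (P x) ∂ν := by
    rw [← hpush, integral_map hPmeas.aemeasurable hfc.aestronglyMeasurable]
  have hfPν : Integrable (fun x => f (P x)) ν := by
    have := hfμ
    rw [← hpush] at this
    exact (integrable_map_measure hfc.aestronglyMeasurable hPmeas.aemeasurable).mp this
  -- pointwise bound
  have hpt : ∀ x, f x - f (P x) ≤ Metric.infDist x M := by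
    intro x
    have h1 : dist (f x) (f (P x)) ≤ dist x (P x) := by
      simpa using hflip.dist_le_mul x (P x)
    calc f x - f (P x) ≤ |f x - f (P x)| := le_abs_self _
      _ = dist (f x) (f (P x)) := (Real.dist_eq _ _).symm
      _ ≤ dist x (P x) := h1
      _ = ‖x - P x‖ := by rw [dist_eq_norm]
      _ = Metric.infDist x M := hPdist x
  have hint : (∫ x, (f x - f (P x)) ∂ν) ≤ ∫ x, Metric.infDist x M ∂ν :=
    integral_mono (hfν.sub hfPν) hdν hpt
  rw [integral_sub hfν hfPν] at hint
  rw [hdμ0, hmap]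
  linarith
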